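/- Let P ⊆ ℝ^d be the convex hull of a finite set of points, let E ⊆ ℝ^d be a two-dimensional linear subspace, and let a ∈ E. Then conv(P ∪ {a}) ∩ E = conv((P ∩ E) ∪ {a}), and the number of edges satisfies |edges(conv(P ∪ {a}) ∩ E)| ≤ |edges(P ∩ E)| + 2. -/

import Mathlib

open RealInnerProductSpace

/-- `F` is an edge of the convex set `K`: a one-dimensional exposed face, i.e. the set of
maximizers of some linear functional `⟪u, ·⟫` over `K`, whose affine span is
one-dimensional. -/
def IsEdge {d : ℕ} (K F : Set (EuclideanSpace ℝ (Fin d))) : Prop :=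
  (∃ u : EuclideanSpace ℝ (Fin d),
      F = {x ∈ K | ∀ y ∈ K, ⟪u, y⟫ ≤ ⟪u, x⟫}) ∧
    Module.finrank ℝ (affineSpan ℝ F).direction = 1

/-- The number of edges of a convex set, as an extended natural number. -/
noncomputable def edgeCount {d : ℕ} (K : Set (EuclideanSpace ℝ (Fin d))) : ℕ∞ :=
  {F : Set (EuclideanSpace ℝ (Fin d)) | IsEdge K F}.encard

section helpers

variable {d : ℕ}

lemma IsEdge.nonempty {K F : Set (EuclideanSpace ℝ (Fin d))} (h : IsEdge K F) : F.Nonempty := by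
  rcases F.eq_empty_or_nonempty with he | hne
  · exfalso
    have := h.2
    rw [he, direction_affineSpan, vectorSpan_empty, finrank_bot] at this
    exact one_ne_zero this.symm
  · exact hne

lemma IsEdge.subset {K F : Set (EuclideanSpace ℝ (Fin d))} (h : IsEdge K F) : F ⊆ K := by
  obtain ⟨⟨u, hu⟩, -⟩ := h
  rw [hu]; exact fun x hx => hx.1

lemma IsEdge.exists_ne {K F : Set (EuclideanSpace ℝ (Fin d))} (h : IsEdge K F)
    {a : EuclideanSpace ℝ (Fin d)} (ha : a ∈ F) : ∃ b ∈ F, b ≠ a := by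
  by_contra hc
  push_neg at hc
  have hFa : F = {a} := Set.eq_singleton_iff_unique_mem.2 ⟨ha, hc⟩
  have := h.2
  rw [hFa, direction_affineSpan, vectorSpan_singleton, finrank_bot] at this
  exact one_ne_zero this.symm

end helpers

section line

variable {d : ℕ}

lemma edge_eq_inter_line {K F : Set (EuclideanSpace ℝ (Fin d))} (hF : IsEdge K F)
    {a b : EuclideanSpace ℝ (Fin d)} (haF : a ∈ F) (hbF : b ∈ F) (hab : b ≠ a) :
    F = K ∩ (affineSpan ℝ {a, b} : Set (EuclideanSpace ℝ (Fin d))) := by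
  obtain ⟨⟨u, hu⟩, hdim⟩ := hF
  have hFK : F ⊆ K := by rw [hu]; exact fun x hx => hx.1
  have hle : affineSpan ℝ ({a, b} : Set (EuclideanSpace ℝ (Fin d))) ≤ affineSpan ℝ F :=
    affineSpan_mono ℝ (Set.insert_subset haF (Set.singleton_subset_iff.2 hbF))
  have hdir : (affineSpan ℝ ({a, b} : Set (EuclideanSpace ℝ (Fin d)))).direction
      = (affineSpan ℝ F).direction := by
    apply Submodule.eq_of_le_of_finrank_le (AffineSubspace.direction_le hle)
    rw [hdim, direction_affineSpan, vectorSpan_pair, finrank_span_singleton (by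
      rw [vsub_eq_sub, sub_ne_zero]; exact fun h => hab h.symm)]
  have hspan : affineSpan ℝ ({a, b} : Set (EuclideanSpace ℝ (Fin d))) = affineSpan ℝ F :=
    AffineSubspace.ext_of_direction_eq hdir
      ⟨a, left_mem_affineSpan_pair ℝ a b, subset_affineSpan ℝ F haF⟩
  -- key inner-product facts
  have hamax : ∀ y ∈ K, ⟪u, y⟫ ≤ ⟪u, a⟫ := by
    have := hu ▸ haF; exact this.2
  have hbmax : ∀ y ∈ K, ⟪u, y⟫ ≤ ⟪u, b⟫ := by
    have := hu ▸ hbF; exact this.2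
  have hub : ⟪u, b⟫ = ⟪u, a⟫ := le_antisymm (hamax b (hFK hbF)) (hbmax a (hFK haF))
  apply Set.Subset.antisymm
  · exact fun x hx => ⟨hFK hx, hspan ▸ subset_affineSpan ℝ F hx⟩
  · rintro x ⟨hxK, hxL⟩
    have hmem : x -ᵥ a ∈ (affineSpan ℝ ({a, b} : Set (EuclideanSpace ℝ (Fin d)))).direction :=
      AffineSubspace.vsub_mem_direction hxL (left_mem_affineSpan_pair ℝ a b)
    rw [direction_affineSpan, vectorSpan_pair] at hmem
    obtain ⟨r, hr⟩ := Submodule.mem_span_singleton.1 hmem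
    have hx : x = r • (a - b) + a := by
      simp only [vsub_eq_sub] at hr
      rw [← sub_eq_iff_eq_add, ← hr]
    have hux : ⟪u, x⟫ = ⟪u, a⟫ := by
      rw [hx, inner_add_right, real_inner_smul_right, inner_sub_right, hub]
      ring
    rw [hu]
    exact ⟨hxK, fun y hy => hux ▸ hamax y hy⟩

end line

section strict

variable {d : ℕ}

lemma edge_strict {K F G : Set (EuclideanSpace ℝ (Fin d))} (hF : IsEdge K F) (hG : IsEdge K G)
    {a : EuclideanSpace ℝ (Fin d)} (haF : a ∈ F) (haG : a ∈ G) (hFG : F ≠ G)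
    {u : EuclideanSpace ℝ (Fin d)}
    (hu : F = {x ∈ K | ∀ y ∈ K, ⟪u, y⟫ ≤ ⟪u, x⟫})
    {b : EuclideanSpace ℝ (Fin d)} (hbG : b ∈ G) (hba : b ≠ a) : ⟪u, b - a⟫ < 0 := by
  have hamax : ∀ y ∈ K, ⟪u, y⟫ ≤ ⟪u, a⟫ := (hu ▸ haF).2
  have hble : ⟪u, b⟫ ≤ ⟪u, a⟫ := hamax b (hG.subset hbG)
  rcases lt_or_eq_of_le hble with hlt | heq
  · rw [inner_sub_right]; linarith
  · exfalso
    have hbF : b ∈ F := by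
      rw [hu]; exact ⟨hG.subset hbG, fun y hy => (hamax y hy).trans heq.ge⟩
    have h1 := edge_eq_inter_line hF haF hbF hba
    have h2 := edge_eq_inter_line hG haG hbG hba
    exact hFG (h1.trans h2.symm)

lemma not_three_edges {E : Submodule ℝ (EuclideanSpace ℝ (Fin d))}
    (hE : Module.finrank ℝ E = 2) {K : Set (EuclideanSpace ℝ (Fin d))} (hKE : K ⊆ (E : Set _))
    {a : EuclideanSpace ℝ (Fin d)} {F₁ F₂ F₃ : Set (EuclideanSpace ℝ (Fin d))}
    (h₁ : IsEdge K F₁) (h₂ : IsEdge K F₂) (h₃ : IsEdge K F₃)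
    (ha₁ : a ∈ F₁) (ha₂ : a ∈ F₂) (ha₃ : a ∈ F₃)
    (h12 : F₁ ≠ F₂) (h13 : F₁ ≠ F₃) (h23 : F₂ ≠ F₃) : False := by
  obtain ⟨b₁, hb₁, hb₁a⟩ := h₁.exists_ne ha₁
  obtain ⟨b₂, hb₂, hb₂a⟩ := h₂.exists_ne ha₂
  obtain ⟨b₃, hb₃, hb₃a⟩ := h₃.exists_ne ha₃
  obtain ⟨u₁, hu₁⟩ := h₁.1
  obtain ⟨u₂, hu₂⟩ := h₂.1
  obtain ⟨u₃, hu₃⟩ := h₃.1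
  set v₁ := b₁ - a with hv₁
  set v₂ := b₂ - a with hv₂
  set v₃ := b₃ - a with hv₃
  have hz₁ : ⟪u₁, v₁⟫ = 0 := by
    have := le_antisymm ((hu₁ ▸ ha₁).2 b₁ (h₁.subset hb₁)) ((hu₁ ▸ hb₁).2 a (h₁.subset ha₁))
    rw [hv₁, inner_sub_right]; linarith [this]
  have hz₂ : ⟪u₂, v₂⟫ = 0 := by
    have := le_antisymm ((hu₂ ▸ ha₂).2 b₂ (h₂.subset hb₂)) ((hu₂ ▸ hb₂).2 a (h₂.subset ha₂))
    rw [hv₂, inner_sub_right]; linarith [this]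
  have hz₃ : ⟪u₃, v₃⟫ = 0 := by
    have := le_antisymm ((hu₃ ▸ ha₃).2 b₃ (h₃.subset hb₃)) ((hu₃ ▸ hb₃).2 a (h₃.subset ha₃))
    rw [hv₃, inner_sub_right]; linarith [this]
  have s12 : ⟪u₁, v₂⟫ < 0 := edge_strict h₁ h₂ ha₁ ha₂ h12 hu₁ hb₂ hb₂a
  have s13 : ⟪u₁, v₃⟫ < 0 := edge_strict h₁ h₃ ha₁ ha₃ h13 hu₁ hb₃ hb₃a
  have s21 : ⟪u₂, v₁⟫ < 0 := edge_strict h₂ h₁ ha₂ ha₁ h12.symm hu₂ hb₁ hb₁a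
  have s23 : ⟪u₂, v₃⟫ < 0 := edge_strict h₂ h₃ ha₂ ha₃ h23 hu₂ hb₃ hb₃a
  have s31 : ⟪u₃, v₁⟫ < 0 := edge_strict h₃ h₁ ha₃ ha₁ h13.symm hu₃ hb₁ hb₁a
  have s32 : ⟪u₃, v₂⟫ < 0 := edge_strict h₃ h₂ ha₃ ha₂ h23.symm hu₃ hb₂ hb₂a
  -- v₁ v₂ linearly independent
  have hv₁ne : v₁ ≠ 0 := sub_ne_zero.2 hb₁a
  have hindep : LinearIndependent ℝ ![v₁, v₂] := by
    rw [LinearIndependent.pair_iff]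
    intro s t hst
    have ht : t = 0 := by
      have : ⟪u₁, s • v₁ + t • v₂⟫ = 0 := by rw [hst, inner_zero_right]
      rw [inner_add_right, real_inner_smul_right, real_inner_smul_right, hz₁] at this
      have h0 : t * ⟪u₁, v₂⟫ = 0 := by linarith
      rcases mul_eq_zero.1 h0 with h | h
      · exact h
      · exact absurd h (ne_of_lt s12)
    subst ht
    simp only [zero_smul, add_zero, smul_eq_zero] at hst
    rcases hst with h | h
    · exact ⟨h, rfl⟩
    · exact absurd h hv₁ne
  -- span {v₁, v₂} = E
  have hmemE : ∀ {x y : EuclideanSpace ℝ (Fin d)}, x ∈ K → y ∈ K → x - y ∈ E :=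
    fun hx hy => E.sub_mem (hKE hx) (hKE hy)
  have hvE₁ : v₁ ∈ E := hmemE (h₁.subset hb₁) (h₁.subset ha₁)
  have hvE₂ : v₂ ∈ E := hmemE (h₂.subset hb₂) (h₂.subset ha₂)
  have hvE₃ : v₃ ∈ E := hmemE (h₃.subset hb₃) (h₃.subset ha₃)
  have hspan : Submodule.span ℝ {v₁, v₂} = E := by
    apply Submodule.eq_of_le_of_finrank_le
    · rw [Submodule.span_le]; exact Set.insert_subset hvE₁ (Set.singleton_subset_iff.2 hvE₂)
    · rw [hE]
      have : ({v₁, v₂} : Set (EuclideanSpace ℝ (Fin d))) = Set.range ![v₁, v₂] := by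
        simp [Matrix.range_cons, Matrix.range_empty, Set.pair_comm]
      rw [this, finrank_span_eq_card hindep]
      simp
  obtain ⟨α, β, hαβ⟩ := Submodule.mem_span_pair.1 (hspan ▸ hvE₃)
  have e1 : ⟪u₁, v₃⟫ = β * ⟪u₁, v₂⟫ := by
    rw [← hαβ, inner_add_right, real_inner_smul_right, real_inner_smul_right, hz₁]; ring
  have e2 : ⟪u₂, v₃⟫ = α * ⟪u₂, v₁⟫ := by
    rw [← hαβ, inner_add_right, real_inner_smul_right, real_inner_smul_right, hz₂]; ring
  have e3 : α * ⟪u₃, v₁⟫ + β * ⟪u₃, v₂⟫ = 0 := by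
    rw [← hz₃, ← hαβ, inner_add_right, real_inner_smul_right, real_inner_smul_right]
  have hβ : 0 < β := by nlinarith
  have hα : 0 < α := by nlinarith
  nlinarith

end strict

section two

variable {d : ℕ}

lemma edges_through_encard_le_two {E : Submodule ℝ (EuclideanSpace ℝ (Fin d))}
    (hE : Module.finrank ℝ E = 2) {K : Set (EuclideanSpace ℝ (Fin d))} (hKE : K ⊆ (E : Set _))
    (a : EuclideanSpace ℝ (Fin d)) :
    {F : Set (EuclideanSpace ℝ (Fin d)) | IsEdge K F ∧ a ∈ F}.encard ≤ 2 := by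
  set B := {F : Set (EuclideanSpace ℝ (Fin d)) | IsEdge K F ∧ a ∈ F} with hB
  rcases B.eq_empty_or_nonempty with he | ⟨F₁, hF₁⟩
  · rw [he]; simp
  by_cases hsub : B ⊆ {F₁}
  · exact (Set.encard_mono hsub).trans (by simp)
  obtain ⟨F₂, hF₂, hF₂ne⟩ : ∃ F₂ ∈ B, F₂ ≠ F₁ := by
    by_contra hc; push_neg at hc
    exact hsub fun F hF => hc F hF
  have hBsub : B ⊆ {F₁, F₂} := by
    intro F₃ hF₃
    by_contra hc
    simp only [Set.mem_insert_iff, Set.mem_singleton_iff, not_or] at hc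
    exact not_three_edges hE hKE hF₁.1 hF₂.1 hF₃.1 hF₁.2 hF₂.2 hF₃.2
      hF₂ne.symm (Ne.symm hc.1) (Ne.symm hc.2)
  exact (Set.encard_mono hBsub).trans (by rw [Set.encard_pair hF₂ne.symm])

end two

section notmem

variable {d : ℕ}

lemma mem_hull_insert {Q : Set (EuclideanSpace ℝ (Fin d))} (hQ : Convex ℝ Q)
    (hQne : Q.Nonempty) {a x : EuclideanSpace ℝ (Fin d)}
    (hx : x ∈ convexHull ℝ (Q ∪ {a})) :
    ∃ q ∈ Q, ∃ μ ν : ℝ, 0 ≤ μ ∧ 0 ≤ ν ∧ μ + ν = 1 ∧ μ • a + ν • q = x := by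
  rw [Set.union_singleton, convexHull_insert hQne, mem_convexJoin] at hx
  obtain ⟨p, hp, q, hq, hseg⟩ := hx
  rw [Set.mem_singleton_iff] at hp
  subst hp
  rw [hQ.convexHull_eq] at hq
  obtain ⟨μ, ν, hμ, hν, hμν, hx⟩ := hseg
  exact ⟨q, hq, μ, ν, hμ, hν, hμν, hx⟩

lemma edge_of_not_mem {Q : Set (EuclideanSpace ℝ (Fin d))} (hQ : Convex ℝ Q)
    {a : EuclideanSpace ℝ (Fin d)} {F : Set (EuclideanSpace ℝ (Fin d))}
    (hF : IsEdge (convexHull ℝ (Q ∪ {a})) F) (haF : a ∉ F) : IsEdge Q F := by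
  set K := convexHull ℝ (Q ∪ {a}) with hK
  have hQK : Q ⊆ K := (Set.subset_union_left).trans (subset_convexHull ℝ _)
  have haK : a ∈ K := subset_convexHull ℝ _ (Set.mem_union_right _ rfl)
  obtain ⟨⟨u, hu⟩, hdim⟩ := hF
  have hFsub : F ⊆ K := by rw [hu]; exact fun x hx => hx.1
  obtain ⟨x₀, hx₀⟩ := IsEdge.nonempty (K := K) ⟨⟨u, hu⟩, hdim⟩
  have hx₀K : x₀ ∈ K := hFsub hx₀
  have hx₀max : ∀ y ∈ K, ⟪u, y⟫ ≤ ⟪u, x₀⟫ := (hu ▸ hx₀).2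
  have hstrict : ⟪u, a⟫ < ⟪u, x₀⟫ := by
    rcases lt_or_eq_of_le (hx₀max a haK) with h | h
    · exact h
    · exact absurd (by rw [hu]; exact ⟨haK, fun y hy => (hx₀max y hy).trans h.ge⟩) haF
  have hQne : Q.Nonempty := by
    rcases Q.eq_empty_or_nonempty with he | hne
    · exfalso
      rw [he] at hK
      simp only [Set.empty_union, convexHull_singleton] at hK
      rw [hK] at hx₀K
      exact haF (hx₀K ▸ hx₀)
    · exact hne
  have hmemQ : ∀ x ∈ F, x ∈ Q := by
    intro x hx
    have hxK : x ∈ K := hFsub hx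
    have hxmax : ∀ y ∈ K, ⟪u, y⟫ ≤ ⟪u, x⟫ := (hu ▸ hx).2
    have hxM : ⟪u, x⟫ = ⟪u, x₀⟫ := le_antisymm (hx₀max x hxK) (hxmax x₀ hx₀K)
    obtain ⟨q, hq, μ, ν, hμ, hν, hμν, hxe⟩ := mem_hull_insert hQ hQne hxK
    have hqle : ⟪u, q⟫ ≤ ⟪u, x₀⟫ := hx₀max q (hQK hq)
    have hxi : ⟪u, x⟫ = μ * ⟪u, a⟫ + ν * ⟪u, q⟫ := by
      rw [← hxe, inner_add_right, real_inner_smul_right, real_inner_smul_right]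
    have hA : ⟪u, a⟫ < ⟪u, x⟫ := by rw [hxM]; exact hstrict
    have hQle : ⟪u, q⟫ ≤ ⟪u, x⟫ := by rw [hxM]; exact hqle
    have h3 : μ * ⟪u, x⟫ + ν * ⟪u, x⟫ = ⟪u, x⟫ := by rw [← add_mul, hμν, one_mul]
    have hμ0 : μ = 0 := by
      by_contra hμne
      have hμpos : 0 < μ := lt_of_le_of_ne hμ (Ne.symm hμne)
      have h1 : μ * ⟪u, a⟫ < μ * ⟪u, x⟫ := mul_lt_mul_of_pos_left hA hμpos
      have h2 : ν * ⟪u, q⟫ ≤ ν * ⟪u, x⟫ := mul_le_mul_of_nonneg_left hQle hν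
      linarith
    have hν1 : ν = 1 := by linarith
    have : x = q := by rw [← hxe, hμ0, hν1]; simp
    exact this ▸ hq
  have hFeq : F = {x ∈ Q | ∀ y ∈ Q, ⟪u, y⟫ ≤ ⟪u, x⟫} := by
    ext x
    constructor
    · intro hx
      exact ⟨hmemQ x hx, fun y hy => (hu ▸ hx).2 y (hQK hy)⟩
    · rintro ⟨hxQ, hxmax⟩
      have hx₀Q : x₀ ∈ Q := hmemQ x₀ hx₀
      have hax : ⟪u, a⟫ < ⟪u, x⟫ := lt_of_lt_of_le hstrict (hxmax x₀ hx₀Q)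
      rw [hu]
      refine ⟨hQK hxQ, fun y hy => ?_⟩
      obtain ⟨q, hq, μ, ν, hμ, hν, hμν, hye⟩ := mem_hull_insert hQ hQne hy
      have hyi : ⟪u, y⟫ = μ * ⟪u, a⟫ + ν * ⟪u, q⟫ := by
        rw [← hye, inner_add_right, real_inner_smul_right, real_inner_smul_right]
      have hqx : ⟪u, q⟫ ≤ ⟪u, x⟫ := hxmax q hq
      have h1 : μ * ⟪u, a⟫ ≤ μ * ⟪u, x⟫ := mul_le_mul_of_nonneg_left hax.le hμ
      have h2 : ν * ⟪u, q⟫ ≤ ν * ⟪u, x⟫ := mul_le_mul_of_nonneg_left hqx hν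
      have h3 : μ * ⟪u, x⟫ + ν * ⟪u, x⟫ = ⟪u, x⟫ := by rw [← add_mul, hμν, one_mul]
      linarith
  exact ⟨⟨u, hFeq⟩, hdim⟩

end notmem

/-- Adding a point of the plane `E` to a polytope `P`:
`conv(P ∪ {a}) ∩ E = conv((P ∩ E) ∪ {a})`, and the number of edges of the section grows by
at most `2`. -/
theorem edges_insert_point_in_plane (d : ℕ) (s : Finset (EuclideanSpace ℝ (Fin d)))
    (E : Submodule ℝ (EuclideanSpace ℝ (Fin d))) (hE : Module.finrank ℝ E = 2)
    (a : EuclideanSpace ℝ (Fin d)) (ha : a ∈ E) :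
    convexHull ℝ (convexHull ℝ (s : Set (EuclideanSpace ℝ (Fin d))) ∪ {a}) ∩
        (E : Set (EuclideanSpace ℝ (Fin d))) =
      convexHull ℝ ((convexHull ℝ (s : Set (EuclideanSpace ℝ (Fin d))) ∩
        (E : Set (EuclideanSpace ℝ (Fin d)))) ∪ {a}) ∧
    edgeCount (convexHull ℝ (convexHull ℝ (s : Set (EuclideanSpace ℝ (Fin d))) ∪ {a}) ∩
        (E : Set (EuclideanSpace ℝ (Fin d)))) ≤
      edgeCount (convexHull ℝ (s : Set (EuclideanSpace ℝ (Fin d))) ∩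
        (E : Set (EuclideanSpace ℝ (Fin d)))) + 2 := by
  have hEconv : Convex ℝ (E : Set (EuclideanSpace ℝ (Fin d))) := E.convex
  set Q : Set (EuclideanSpace ℝ (Fin d)) := convexHull ℝ (s : Set (EuclideanSpace ℝ (Fin d)))
    with hQdef
  have hQconv : Convex ℝ Q := convex_convexHull ℝ _
  have h1 : convexHull ℝ (Q ∪ {a}) ∩ (E : Set (EuclideanSpace ℝ (Fin d)))
      = convexHull ℝ ((Q ∩ (E : Set (EuclideanSpace ℝ (Fin d)))) ∪ {a}) := by
    apply Set.Subset.antisymm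
    · rintro x ⟨hx, hxE⟩
      rcases Q.eq_empty_or_nonempty with he | hQne
      · rw [he] at hx ⊢
        simp only [Set.empty_union, convexHull_singleton] at hx
        simp only [Set.empty_inter, Set.empty_union]
        exact subset_convexHull ℝ _ hx
      · obtain ⟨q, hq, μ, ν, hμ, hν, hμν, hxe⟩ := mem_hull_insert hQconv hQne hx
        rcases eq_or_lt_of_le hν with hν0 | hνpos
        · have hxa : x = a := by
            have hμ1 : μ = 1 := by linarith
            rw [← hxe, hμ1, ← hν0]; simp
          exact subset_convexHull ℝ _ (Set.mem_union_right _ (hxa ▸ rfl))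
        · have hqE : q ∈ E := by
            have hq' : q = ν⁻¹ • (x - μ • a) := by
              rw [← hxe]
              rw [add_sub_cancel_left, smul_smul, inv_mul_cancel₀ (ne_of_gt hνpos), one_smul]
            rw [hq']
            exact E.smul_mem _ (E.sub_mem hxE (E.smul_mem _ ha))
          have hseg : segment ℝ a q ⊆
              convexHull ℝ ((Q ∩ (E : Set (EuclideanSpace ℝ (Fin d)))) ∪ {a}) :=
            segment_subset_convexHull (Set.mem_union_right _ rfl)
              (Set.mem_union_left _ ⟨hq, hqE⟩)
          exact hseg ⟨μ, ν, hμ, hν, hμν, hxe⟩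
    · apply Set.subset_inter
      · exact convexHull_mono (Set.union_subset_union_left _ Set.inter_subset_left)
      · exact convexHull_min
          (Set.union_subset Set.inter_subset_right (Set.singleton_subset_iff.2 ha)) hEconv
  refine ⟨h1, ?_⟩
  set K : Set (EuclideanSpace ℝ (Fin d)) :=
    convexHull ℝ (Q ∪ {a}) ∩ (E : Set (EuclideanSpace ℝ (Fin d))) with hKdef
  set Q' : Set (EuclideanSpace ℝ (Fin d)) := Q ∩ (E : Set (EuclideanSpace ℝ (Fin d)))
    with hQ'def
  have hKE : K ⊆ (E : Set (EuclideanSpace ℝ (Fin d))) := Set.inter_subset_right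
  have hQ'conv : Convex ℝ Q' := hQconv.inter hEconv
  have hKeq : K = convexHull ℝ (Q' ∪ {a}) := h1
  show Set.encard {F | IsEdge K F} ≤ Set.encard {F | IsEdge Q' F} + 2
  have hsplit : {F : Set (EuclideanSpace ℝ (Fin d)) | IsEdge K F} ⊆
      {F | IsEdge Q' F} ∪ {F | IsEdge K F ∧ a ∈ F} := by
    intro F hF
    by_cases haf : a ∈ F
    · exact Or.inr ⟨hF, haf⟩
    · exact Or.inl (edge_of_not_mem hQ'conv (hKeq ▸ hF) haf)
  calc Set.encard {F : Set (EuclideanSpace ℝ (Fin d)) | IsEdge K F}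
      ≤ Set.encard ({F : Set (EuclideanSpace ℝ (Fin d)) | IsEdge Q' F}
          ∪ {F | IsEdge K F ∧ a ∈ F}) := Set.encard_mono hsplit
    _ ≤ Set.encard {F : Set (EuclideanSpace ℝ (Fin d)) | IsEdge Q' F}
          + Set.encard {F : Set (EuclideanSpace ℝ (Fin d)) | IsEdge K F ∧ a ∈ F} :=
        Set.encard_union_le _ _
    _ ≤ _ + 2 := add_le_add le_rfl (edges_through_encard_le_two hE hKE a)
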